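/- arXiv:1807.05793 — 4 statements merged into one kernel-verified Lean document; each statement's English description precedes it below -/
import Mathlib

section
/- Let u_α minimize u ↦ ½‖Tu − v^δ‖² + α·(J(u) − J(u⁰) − ⟨q⁰, u − u⁰⟩) over a convex set Ω containing u†, where q⁰ ∈ ∂J(u⁰) satisfies ⟨q⁰, u_α − u†⟩ = 0 (e.g., q⁰ = 0 for constant initial guess). Assume ‖T u† − v^δ‖ ≤ δ, the variational inequality J(u†) − J(u) ≤ Ψ(‖Tu − Tu†‖) for all u, the discrepancy bounds τ̲·δ ≤ ‖T u_α − v^δ‖ and ‖T u_α − T u†‖ ≤ (τ̄+1)δ with 1 < τ̲ ≤ τ̄, and Ψ concave increasing with Ψ(0)=0. Then δ²/(2α) ≤ Ψ(δ)/(τ̲ − 1). -/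
/-!
Compare the Tikhonov functional at its minimiser `u_α` with its value at `u†`. Since
`⟨q⁰, u_α - u†⟩ = 0`, the Bregman terms differ only by `J(u_α) - J(u†)`, so with the
residual `r = ‖T u_α - v^δ‖` one gets `r² ≤ δ² + 2α (J(u†) - J(u_α)) ≤ δ² + 2α Ψ(r + δ)`,
by the source condition and `‖T u_α - T u†‖ ≤ r + δ`. A concave `Ψ` with `Ψ(0) = 0` has
nonincreasing `Ψ(t)/t`, so `Ψ(r + δ) ≤ (r + δ) Ψ(δ)/δ`; dividing by `r + δ` leaves
`(r - δ) δ ≤ 2α Ψ(δ)`, and the discrepancy principle `r ≥ τ̲ δ` finishes.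
-/

open Set

theorem ConcaveOn.antitoneOn_div_self_of_map_zero {𝕜 : Type*} [Field 𝕜] [LinearOrder 𝕜]
    [IsStrictOrderedRing 𝕜] {f : 𝕜 → 𝕜} (hf : ConcaveOn 𝕜 (Ici 0) f) (h0 : f 0 = 0) :
    AntitoneOn (fun x => f x / x) (Ioi 0) := by
  intro x hx y hy hxy
  have h := hf.neg.secant_mono (mem_Ici.2 le_rfl) hx.le hy.le hx.ne' hy.ne' hxy
  simp only [Pi.neg_apply, h0, neg_zero, sub_zero, neg_div] at h
  exact neg_le_neg_iff.mp h

section Tikhonov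

variable {E F : Type*} [NormedAddCommGroup E] [InnerProductSpace ℝ E] [SeminormedAddCommGroup F]

/-- The Bregman distance `D^q(u, u₀)` of `J`, for `q ∈ ∂J(u₀)`. -/
def bregmanDist (J : E → ℝ) (q u₀ u : E) : ℝ :=
  J u - J u₀ - inner ℝ q (u - u₀)

theorem bregmanDist_sub_bregmanDist {J : E → ℝ} {q u₀ u v : E} (h : inner ℝ q (u - v) = 0) :
    bregmanDist J q u₀ u - bregmanDist J q u₀ v = J u - J v := by
  have hsplit : inner ℝ q (u - u₀) - inner ℝ q (v - u₀) = inner ℝ q (u - v) := by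
    rw [← inner_sub_right, sub_sub_sub_cancel_right]
  unfold bregmanDist
  linarith

theorem tikhonov_residual_sq_le {T : E → F} {J : E → ℝ} {q u₀ u v : E} {y : F} {α δ : ℝ}
    (hmin : (1 / 2) * ‖T u - y‖ ^ 2 + α * bregmanDist J q u₀ u ≤
      (1 / 2) * ‖T v - y‖ ^ 2 + α * bregmanDist J q u₀ v)
    (hq : inner ℝ q (u - v) = 0) (hv : ‖T v - y‖ ≤ δ) :
    ‖T u - y‖ ^ 2 ≤ δ ^ 2 + 2 * α * (J v - J u) := by
  have hbreg := bregmanDist_sub_bregmanDist (J := J) (u₀ := u₀) hq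
  have hv_sq : ‖T v - y‖ ^ 2 ≤ δ ^ 2 := pow_le_pow_left₀ (norm_nonneg _) hv 2
  have hpenalty : α * bregmanDist J q u₀ u = α * bregmanDist J q u₀ v + α * (J u - J v) := by
    rw [← mul_add, ← hbreg, add_sub_cancel]
  linarith

end Tikhonov

theorem stmt_10_general {N M : ℕ}
    (T : EuclideanSpace ℝ (Fin N) →L[ℝ] EuclideanSpace ℝ (Fin M))
    (J : EuclideanSpace ℝ (Fin N) → ℝ)
    (Ω : Set (EuclideanSpace ℝ (Fin N)))
    (uα udag u0 q0 : EuclideanSpace ℝ (Fin N))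
    (vδ : EuclideanSpace ℝ (Fin M))
    (α δ τlo : ℝ) (Ψ : ℝ → ℝ)
    (hα : 0 < α) (hδ : 0 ≤ δ)
    (hτlo : 1 < τlo)
    (hΨconc : ConcaveOn ℝ (Set.Ici (0 : ℝ)) Ψ)
    (hΨmono : MonotoneOn Ψ (Set.Ici (0 : ℝ)))
    (hΨ0 : Ψ 0 = 0)
    (hudag : udag ∈ Ω)
    (hq0 : (inner ℝ q0 (uα - udag) : ℝ) = 0)
    (hmin : ∀ u ∈ Ω,
      (1 / 2) * ‖T uα - vδ‖ ^ 2
          + α * (J uα - J u0 - (inner ℝ q0 (uα - u0) : ℝ)) ≤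
        (1 / 2) * ‖T u - vδ‖ ^ 2
          + α * (J u - J u0 - (inner ℝ q0 (u - u0) : ℝ)))
    (hnoise : ‖T udag - vδ‖ ≤ δ)
    (hVSC : ∀ u, J udag - J u ≤ Ψ ‖T u - T udag‖)
    (hdisc_lo : τlo * δ ≤ ‖T uα - vδ‖) :
    δ ^ 2 / (2 * α) ≤ Ψ δ / (τlo - 1) := by
  set r := ‖T uα - vδ‖
  have hr : 0 ≤ r := norm_nonneg _
  have hresid : r ^ 2 ≤ δ ^ 2 + 2 * α * (J udag - J uα) :=
    tikhonov_residual_sq_le (hmin udag hudag) hq0 hnoise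
  have hdist : ‖T uα - T udag‖ ≤ r + δ := by
    have := norm_sub_le_norm_sub_add_norm_sub (T uα) vδ (T udag)
    rw [norm_sub_rev vδ] at this
    linarith
  have hJ : J udag - J uα ≤ Ψ (r + δ) :=
    (hVSC uα).trans (hΨmono (norm_nonneg _) (mem_Ici.2 (by positivity)) hdist)
  rcases hδ.eq_or_lt with rfl | hδpos
  · simp [hΨ0]
  have hrδ : 0 < r + δ := by positivity
  have hslope : Ψ (r + δ) * δ ≤ Ψ δ * (r + δ) := by
    have := hΨconc.antitoneOn_div_self_of_map_zero hΨ0 hδpos hrδ (by linarith)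
    rwa [div_le_div_iff₀ hrδ hδpos] at this
  have hgap : (r - δ) * δ ≤ 2 * α * Ψ δ := by
    refine le_of_mul_le_mul_left ?_ hrδ
    calc (r + δ) * ((r - δ) * δ) = (r ^ 2 - δ ^ 2) * δ := by ring
      _ ≤ 2 * α * Ψ (r + δ) * δ := by gcongr; nlinarith
      _ ≤ (r + δ) * (2 * α * Ψ δ) := by nlinarith
  rw [div_le_div_iff₀ (by positivity) (by linarith)]
  nlinarith

/-- Lemma (lower bound for the regularization parameter): under a variational
source condition and Morozov's discrepancy principle, `δ²/(2α) ≤ Ψ(δ)/(τ̲-1)`. -/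
theorem stmt_10 {N M : ℕ}
    (T : EuclideanSpace ℝ (Fin N) →L[ℝ] EuclideanSpace ℝ (Fin M))
    (J : EuclideanSpace ℝ (Fin N) → ℝ)
    (Ω : Set (EuclideanSpace ℝ (Fin N))) (hΩ : Convex ℝ Ω)
    (uα udag u0 q0 : EuclideanSpace ℝ (Fin N))
    (vδ : EuclideanSpace ℝ (Fin M))
    (α δ τlo τhi : ℝ) (Ψ : ℝ → ℝ)
    (hα : 0 < α) (hδ : 0 ≤ δ)
    (hτlo : 1 < τlo) (hττ : τlo ≤ τhi)
    (hΨconc : ConcaveOn ℝ (Set.Ici (0 : ℝ)) Ψ)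
    (hΨmono : MonotoneOn Ψ (Set.Ici (0 : ℝ)))
    (hΨ0 : Ψ 0 = 0)
    (hudag : udag ∈ Ω) (huα : uα ∈ Ω)
    (hq0sub : ∀ x, J x - J u0 ≥ (inner ℝ q0 (x - u0) : ℝ))
    (hq0 : (inner ℝ q0 (uα - udag) : ℝ) = 0)
    (hmin : ∀ u ∈ Ω,
      (1 / 2) * ‖T uα - vδ‖ ^ 2
          + α * (J uα - J u0 - (inner ℝ q0 (uα - u0) : ℝ)) ≤
        (1 / 2) * ‖T u - vδ‖ ^ 2
          + α * (J u - J u0 - (inner ℝ q0 (u - u0) : ℝ)))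
    (hnoise : ‖T udag - vδ‖ ≤ δ)
    (hVSC : ∀ u, J udag - J u ≤ Ψ ‖T u - T udag‖)
    (hdisc_lo : τlo * δ ≤ ‖T uα - vδ‖)
    (hdisc_hi : ‖T uα - T udag‖ ≤ (τhi + 1) * δ) :
    δ ^ 2 / (2 * α) ≤ Ψ δ / (τlo - 1) :=
  stmt_10_general T J Ω uα udag u0 q0 vδ α δ τlo Ψ hα hδ hτlo hΨconc hΨmono hΨ0 hudag hq0 hmin
    hnoise hVSC hdisc_lo
end

section
/- Under the same setting (u_α a minimizer of the Bregman-penalized Tikhonov functional with constant initial guess so that the subgradient inner products cancel, ‖Tu† − v^δ‖ ≤ δ, and τ̲δ ≤ ‖Tu_α − v^δ‖ with τ̲ > 1), one has J(u_α) − J(u†) ≤ δ²/(2α) ≤ Ψ(δ)/(τ̲ − 1). -/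
/-!
Comparing the minimizer `u_α` with `u†` in the Tikhonov functional gives
`‖T u_α - v^δ‖² + 2α (J u_α - J u†) ≤ δ²`, which is the first inequality. For the second, the
variational source condition turns this into `d² - δ² ≤ 2α Ψ(d + δ)` with `d = ‖T u_α - v^δ‖`,
using `‖T u_α - T u†‖ ≤ d + δ`. Since `Ψ` is concave with `Ψ 0 = 0`, `Ψ(t)/t` is antitone, so
`δ Ψ(d + δ) ≤ (d + δ) Ψ(δ)`; cancelling `d + δ` leaves `δ (d - δ) ≤ 2α Ψ(δ)`, and the
discrepancy principle `d ≥ τ̲ δ` bounds the left side below by `(τ̲ - 1) δ²`.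
-/

open Set

theorem ConcaveOn.mul_map_le_mul_map_of_map_zero {Ψ : ℝ → ℝ} (hΨ : ConcaveOn ℝ (Ici 0) Ψ)
    (h0 : Ψ 0 = 0) {x y : ℝ} (hx : 0 ≤ x) (hxy : x ≤ y) : x * Ψ y ≤ y * Ψ x := by
  rcases hx.eq_or_lt with rfl | hx
  · simp [h0]
  have hy : 0 < y := hx.trans_le hxy
  have hconc := hΨ.2 (mem_Ici.2 hy.le) (mem_Ici.2 le_rfl) (div_nonneg hx.le hy.le)
    (sub_nonneg.2 ((div_le_one hy).2 hxy)) (add_sub_cancel _ _)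
  simp only [smul_eq_mul, mul_zero, add_zero, h0, div_mul_cancel₀ x hy.ne'] at hconc
  calc x * Ψ y = y * (x / y * Ψ y) := by field_simp
    _ ≤ y * Ψ x := mul_le_mul_of_nonneg_left hconc hy.le

section Tikhonov

variable {X F : Type*} [SeminormedAddCommGroup F] {A : X → F} {J : X → ℝ} {u u' : X} {v : F}
  {α δ : ℝ}

theorem sq_norm_add_two_mul_sub_le_sq
    (hmin : 1 / 2 * ‖A u - v‖ ^ 2 + α * J u ≤ 1 / 2 * ‖A u' - v‖ ^ 2 + α * J u')
    (hnoise : ‖A u' - v‖ ≤ δ) :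
    ‖A u - v‖ ^ 2 + 2 * α * (J u - J u') ≤ δ ^ 2 := by
  have := pow_le_pow_left₀ (norm_nonneg _) hnoise 2
  linarith

theorem sub_one_mul_sq_le_of_discrepancy {Ψ : ℝ → ℝ} {τ : ℝ}
    (hΨconc : ConcaveOn ℝ (Ici 0) Ψ) (hΨmono : MonotoneOn Ψ (Ici 0)) (hΨ0 : Ψ 0 = 0)
    (hα : 0 ≤ α) (hδ : 0 ≤ δ) (hτ : 1 < τ)
    (hmin : 1 / 2 * ‖A u - v‖ ^ 2 + α * J u ≤ 1 / 2 * ‖A u' - v‖ ^ 2 + α * J u')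
    (hnoise : ‖A u' - v‖ ≤ δ) (hVSC : J u' - J u ≤ Ψ ‖A u - A u'‖)
    (hdisc : τ * δ ≤ ‖A u - v‖) :
    (τ - 1) * δ ^ 2 ≤ 2 * α * Ψ δ := by
  rcases hδ.eq_or_lt with rfl | hδ
  · simp [hΨ0]
  set d := ‖A u - v‖
  have hd : δ < d := lt_of_lt_of_le (lt_mul_of_one_lt_left hδ hτ) hdisc
  have hdist : ‖A u - A u'‖ ≤ d + δ := by
    calc ‖A u - A u'‖ ≤ d + ‖v - A u'‖ := norm_sub_le_norm_sub_add_norm_sub _ _ _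
      _ ≤ d + δ := by rw [norm_sub_rev]; linarith
  have hresidual : d ^ 2 - δ ^ 2 ≤ 2 * α * Ψ (d + δ) := by
    have hΨle := hΨmono (mem_Ici.2 (norm_nonneg _)) (mem_Ici.2 (by positivity)) hdist
    nlinarith [sq_norm_add_two_mul_sub_le_sq hmin hnoise]
  have hratio : δ * Ψ (d + δ) ≤ (d + δ) * Ψ δ :=
    hΨconc.mul_map_le_mul_map_of_map_zero hΨ0 hδ.le (by linarith)
  have hcancel : (d + δ) * (δ * (d - δ)) ≤ (d + δ) * (2 * α * Ψ δ) := by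
    nlinarith [mul_le_mul_of_nonneg_left hresidual hδ.le]
  have hgap : δ * (d - δ) ≤ 2 * α * Ψ δ :=
    le_of_mul_le_mul_left hcancel (by linarith)
  nlinarith

end Tikhonov

theorem stmt_11_general {N M : ℕ}
    (T : EuclideanSpace ℝ (Fin N) →L[ℝ] EuclideanSpace ℝ (Fin M))
    (J : EuclideanSpace ℝ (Fin N) → ℝ)
    (uα udag : EuclideanSpace ℝ (Fin N))
    (vδ : EuclideanSpace ℝ (Fin M))
    (α δ τlo : ℝ) (Ψ : ℝ → ℝ)
    (hα : 0 < α) (hδ : 0 ≤ δ)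
    (hτlo : 1 < τlo)
    (hΨconc : ConcaveOn ℝ (Set.Ici (0 : ℝ)) Ψ)
    (hΨmono : MonotoneOn Ψ (Set.Ici (0 : ℝ)))
    (hΨ0 : Ψ 0 = 0)
    (hmin : (1 / 2) * ‖T uα - vδ‖ ^ 2 + α * J uα ≤
      (1 / 2) * ‖T udag - vδ‖ ^ 2 + α * J udag)
    (hnoise : ‖T udag - vδ‖ ≤ δ)
    (hVSC : ∀ u, J udag - J u ≤ Ψ ‖T u - T udag‖)
    (hdisc_lo : τlo * δ ≤ ‖T uα - vδ‖) :
    J uα - J udag ≤ δ ^ 2 / (2 * α) ∧ δ ^ 2 / (2 * α) ≤ Ψ δ / (τlo - 1) := by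
  constructor
  · rw [le_div_iff₀ (by positivity)]
    linarith [sq_norm_add_two_mul_sub_le_sq hmin hnoise, sq_nonneg ‖T uα - vδ‖]
  · rw [div_le_div_iff₀ (by positivity) (by linarith)]
    linarith [sub_one_mul_sq_le_of_discrepancy hΨconc hΨmono hΨ0 hα.le hδ hτlo hmin hnoise
      (hVSC uα) hdisc_lo]

/-- Lemma (J-difference bound): `J(u_α) - J(u†) ≤ δ²/(2α) ≤ Ψ(δ)/(τ̲-1)`. -/
theorem stmt_11 {N M : ℕ}
    (T : EuclideanSpace ℝ (Fin N) →L[ℝ] EuclideanSpace ℝ (Fin M))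
    (J : EuclideanSpace ℝ (Fin N) → ℝ)
    (uα udag : EuclideanSpace ℝ (Fin N))
    (vδ : EuclideanSpace ℝ (Fin M))
    (α δ τlo τhi : ℝ) (Ψ : ℝ → ℝ)
    (hα : 0 < α) (hδ : 0 ≤ δ)
    (hτlo : 1 < τlo) (hττ : τlo ≤ τhi)
    (hΨconc : ConcaveOn ℝ (Set.Ici (0 : ℝ)) Ψ)
    (hΨmono : MonotoneOn Ψ (Set.Ici (0 : ℝ)))
    (hΨ0 : Ψ 0 = 0)
    (hmin : (1 / 2) * ‖T uα - vδ‖ ^ 2 + α * J uα ≤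
      (1 / 2) * ‖T udag - vδ‖ ^ 2 + α * J udag)
    (hnoise : ‖T udag - vδ‖ ≤ δ)
    (hVSC : ∀ u, J udag - J u ≤ Ψ ‖T u - T udag‖)
    (hdisc_lo : τlo * δ ≤ ‖T uα - vδ‖)
    (hdisc_hi : ‖T uα - T udag‖ ≤ (τhi + 1) * δ) :
    J uα - J udag ≤ δ ^ 2 / (2 * α) ∧ δ ^ 2 / (2 * α) ≤ Ψ δ / (τlo - 1) :=
  stmt_11_general T J uα udag vδ α δ τlo Ψ hα hδ hτlo hΨconc hΨmono hΨ0 hmin hnoise hVSC hdisc_lo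
end

section
/- Assume u_α minimizes F_α, ‖Tu† − v^δ‖ ≤ δ, and J(u†) − J(u_α) ≤ Ψ(‖Tu_α − Tu†‖). Then ½‖Tu_α − Tu†‖² ≤ 2δ² + 2α·Ψ(‖Tu_α − Tu†‖). -/
/-- Lemma: `½‖Tu_α - Tu†‖² ≤ 2δ² + 2α Ψ(‖Tu_α - Tu†‖)`. -/
theorem stmt_13 {N M : ℕ}
    (T : EuclideanSpace ℝ (Fin N) →L[ℝ] EuclideanSpace ℝ (Fin M))
    (J : EuclideanSpace ℝ (Fin N) → ℝ)
    (uα udag : EuclideanSpace ℝ (Fin N))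
    (vδ : EuclideanSpace ℝ (Fin M))
    (α δ : ℝ) (Ψ : ℝ → ℝ)
    (hα : 0 < α) (hδ : 0 ≤ δ)
    (hmin : (1 / 2) * ‖T uα - vδ‖ ^ 2 + α * J uα ≤
      (1 / 2) * ‖T udag - vδ‖ ^ 2 + α * J udag)
    (hnoise : ‖T udag - vδ‖ ≤ δ)
    (hVSC : J udag - J uα ≤ Ψ ‖T uα - T udag‖) :
    (1 / 2) * ‖T uα - T udag‖ ^ 2 ≤
      2 * δ ^ 2 + 2 * α * Ψ ‖T uα - T udag‖ := by
  have htri : ‖T uα - T udag‖ ≤ ‖T uα - vδ‖ + ‖T udag - vδ‖ := by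
    have : T uα - T udag = (T uα - vδ) - (T udag - vδ) := by abel
    rw [this]
    exact norm_sub_le _ _
  have h0 : (0:ℝ) ≤ ‖T uα - T udag‖ := norm_nonneg _
  have h1 : (0:ℝ) ≤ ‖T uα - vδ‖ := norm_nonneg _
  have h2 : (0:ℝ) ≤ ‖T udag - vδ‖ := norm_nonneg _
  nlinarith [sq_nonneg (‖T uα - vδ‖ - ‖T udag - vδ‖), sq_nonneg (δ - ‖T udag - vδ‖),
    mul_le_mul_of_nonneg_left hVSC (le_of_lt hα)]
end

section
/- Suppose Ψ : [0,∞) → [0,∞) is concave, increasing, Ψ(0)=0, Ψ(δ) > 0, and define ᾱ := δ²/Ψ(δ). Suppose ¼‖Tu_α − Tu†‖² ≤ δ² + α·Ψ(‖Tu_α − Tu†‖) holds, that α ≤ ᾱ, and that (τ̲−1)δ ≤ ‖Tu_α − Tu†‖ ≤ (τ̄+1)δ for radii 1 < τ̲ ≤ τ̄ < ∞. Then ¼‖Tu_α − Tu†‖ ≤ ((τ̄+2)/(τ̲−1))·δ. -/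
/-!
By monotonicity and concavity of `Ψ` (with `Ψ 0 = 0`), the upper discrepancy bound gives
`Ψ ‖T uα - T udag‖ ≤ Ψ ((τ̄ + 1) δ) ≤ (τ̄ + 1) Ψ δ`, so `α ≤ δ² / Ψ δ` turns the key inequality into
`¼ ‖T uα - T udag‖² ≤ (τ̄ + 2) δ²`. Dividing one factor `‖T uα - T udag‖` by its lower discrepancy
bound `(τ̲ - 1) δ` gives the claim.
-/

open Set

theorem ConcaveOn.apply_mul_le_mul_apply {Ψ : ℝ → ℝ} (hΨ : ConcaveOn ℝ (Ici 0) Ψ)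
    (hΨ0 : 0 ≤ Ψ 0) {K t : ℝ} (hK : 1 ≤ K) (ht : 0 ≤ t) : Ψ (K * t) ≤ K * Ψ t := by
  have hK0 : 0 < K := by linarith
  have hKt : K * t ∈ Ici (0 : ℝ) := mul_nonneg hK0.le ht
  have hcomb := hΨ.2 hKt self_mem_Ici (inv_nonneg.2 hK0.le)
    (sub_nonneg.2 (inv_le_one_of_one_le₀ hK)) (add_sub_cancel _ _)
  have ht_eq : K⁻¹ • (K * t) + (1 - K⁻¹) • (0 : ℝ) = t := by
    rw [smul_eq_mul, smul_zero, add_zero, inv_mul_cancel_left₀ hK0.ne']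
  rw [ht_eq, smul_eq_mul, smul_eq_mul] at hcomb
  have hscaled : K⁻¹ * Ψ (K * t) ≤ Ψ t :=
    (le_add_of_nonneg_right (mul_nonneg (sub_nonneg.2 (inv_le_one_of_one_le₀ hK)) hΨ0)).trans hcomb
  rwa [inv_mul_le_iff₀ hK0] at hscaled

theorem stmt_15_general {N M : ℕ}
    (T : EuclideanSpace ℝ (Fin N) →L[ℝ] EuclideanSpace ℝ (Fin M))
    (uα udag : EuclideanSpace ℝ (Fin N))
    (α δ τlo τhi : ℝ) (Ψ : ℝ → ℝ)
    (hδ : 0 < δ)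
    (hτlo : 1 < τlo) (hττ : τlo ≤ τhi)
    (hΨconc : ConcaveOn ℝ (Set.Ici (0 : ℝ)) Ψ)
    (hΨmono : MonotoneOn Ψ (Set.Ici (0 : ℝ)))
    (hΨ0 : Ψ 0 = 0) (hΨδ : 0 < Ψ δ)
    (hαbar : α ≤ δ ^ 2 / Ψ δ)
    (hkey : (1 / 4) * ‖T uα - T udag‖ ^ 2 ≤
      δ ^ 2 + α * Ψ ‖T uα - T udag‖)
    (hdisc_lo : (τlo - 1) * δ ≤ ‖T uα - T udag‖)
    (hdisc_hi : ‖T uα - T udag‖ ≤ (τhi + 1) * δ) :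
    (1 / 4) * ‖T uα - T udag‖ ≤ ((τhi + 2) / (τlo - 1)) * δ := by
  set r := ‖T uα - T udag‖
  have hK : 1 ≤ τhi + 1 := by linarith
  have hΨr : Ψ r ≤ (τhi + 1) * Ψ δ :=
    (hΨmono (norm_nonneg _) (mul_nonneg (by linarith) hδ.le) hdisc_hi).trans
      (hΨconc.apply_mul_le_mul_apply hΨ0.ge hK hδ.le)
  have hΨr0 : 0 ≤ Ψ r := hΨ0 ▸ hΨmono self_mem_Ici (norm_nonneg _) (norm_nonneg _)
  have hαΨ : α * Ψ r ≤ (τhi + 1) * δ ^ 2 :=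
    calc α * Ψ r ≤ δ ^ 2 / Ψ δ * ((τhi + 1) * Ψ δ) :=
          mul_le_mul hαbar hΨr hΨr0 (by positivity)
      _ = (τhi + 1) * δ ^ 2 := by field_simp
  have hsq : (1 / 4) * r * r ≤ (τhi + 2) * δ ^ 2 := by nlinarith
  have hlo : 0 < (τlo - 1) * δ := mul_pos (by linarith) hδ
  calc (1 / 4) * r ≤ (τhi + 2) * δ ^ 2 / ((τlo - 1) * δ) := by
        rw [le_div_iff₀ hlo]
        exact (mul_le_mul_of_nonneg_left hdisc_lo (by positivity)).trans hsq
    _ = ((τhi + 2) / (τlo - 1)) * δ := by field_simp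

/-- Lemma: with `ᾱ = δ²/Ψ(δ)` and `α ≤ ᾱ`,
`¼‖Tu_α - Tu†‖ ≤ ((τ̄+2)/(τ̲-1))·δ`. -/
theorem stmt_15 {N M : ℕ}
    (T : EuclideanSpace ℝ (Fin N) →L[ℝ] EuclideanSpace ℝ (Fin M))
    (uα udag : EuclideanSpace ℝ (Fin N))
    (α δ τlo τhi : ℝ) (Ψ : ℝ → ℝ)
    (hα : 0 < α) (hδ : 0 < δ)
    (hτlo : 1 < τlo) (hττ : τlo ≤ τhi)
    (hΨconc : ConcaveOn ℝ (Set.Ici (0 : ℝ)) Ψ)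
    (hΨmono : MonotoneOn Ψ (Set.Ici (0 : ℝ)))
    (hΨ0 : Ψ 0 = 0) (hΨδ : 0 < Ψ δ)
    (hαbar : α ≤ δ ^ 2 / Ψ δ)
    (hkey : (1 / 4) * ‖T uα - T udag‖ ^ 2 ≤
      δ ^ 2 + α * Ψ ‖T uα - T udag‖)
    (hdisc_lo : (τlo - 1) * δ ≤ ‖T uα - T udag‖)
    (hdisc_hi : ‖T uα - T udag‖ ≤ (τhi + 1) * δ) :
    (1 / 4) * ‖T uα - T udag‖ ≤ ((τhi + 2) / (τlo - 1)) * δ :=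
  stmt_15_general T uα udag α δ τlo τhi Ψ hδ hτlo hττ hΨconc hΨmono hΨ0 hΨδ hαbar hkey hdisc_lo
    hdisc_hi
end
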